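/- Let g > 0, T_max > 0, ε_max ∈ (0, π/2) define V_c, and suppose the box B̄ = {v = (v₁,v₂,v₃) ∈ ℝ³ : |vᵢ| ≤ v̄ᵢ, i = 1,2,3} (with v̄ᵢ > 0) is contained in V_c. Let Q_w be a symmetric positive definite 6×6 matrix with P_w = Q_w⁻¹ and β > 0 such that: (i) for each i ∈ {1,2,3}, the 7×7 block matrix [[v̄ᵢ², bᵢᵀ],[bᵢ, Q_w]] is positive semidefinite, where bᵢ ∈ ℝ⁶ is the i-th column of B; and (ii) Q_w Aᵀ + A Q_w − 2 B Bᵀ + β·Q_w + β⁻¹·E Eᵀ ⪯ 0 for a given 6×p matrix E. Fix γ ≥ 1, let w : [0,∞) → ℝᵖ satisfy ‖w(t)‖₂ ≤ 1 for all t, and let ξ : [0,∞) → ℝ⁶ be differentiable with ξ'(t) = A ξ(t) + B·sat(−γ BᵀP_w ξ(t)) + E w(t). If ξ(0)ᵀP_w ξ(0) ≤ 1, then ξ(t)ᵀP_w ξ(t) ≤ 1 for all t ≥ 0; i.e., the ellipsoid E_w = {ξ : ξᵀP_w ξ ≤ 1} is robustly positively invariant under the saturated controller. -/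

import Mathlib

open Matrix Set

noncomputable section

/-- The convex input-constraint set `V_c` in the flat output space. -/
def Vc (g Tmax εmax : ℝ) : Set (Fin 3 → ℝ) :=
  {v | (v 0) ^ 2 + (v 1) ^ 2 + (v 2 + g) ^ 2 ≤ Tmax ^ 2 ∧
       (v 0) ^ 2 + (v 1) ^ 2 ≤ (Real.tan εmax) ^ 2 * (v 2 + g) ^ 2 ∧
       -g ≤ v 2}

/-- Saturation factor `λ*(w) = sup {λ ∈ (0,1] : λ w ∈ K}`. -/
def lamStar (K : Set (Fin 3 → ℝ)) (w : Fin 3 → ℝ) : ℝ :=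
  sSup {l : ℝ | l ∈ Set.Ioc (0 : ℝ) 1 ∧ l • w ∈ K}

/-- Saturated vector `sat(w) = λ*(w) w`. -/
def sat (K : Set (Fin 3 → ℝ)) (w : Fin 3 → ℝ) : Fin 3 → ℝ :=
  lamStar K w • w

/-- Quadcopter state matrix `A = [[0,I],[0,0]]`. -/
def quadA : Matrix (Fin 3 ⊕ Fin 3) (Fin 3 ⊕ Fin 3) ℝ :=
  Matrix.fromBlocks 0 1 0 0

/-- Quadcopter input matrix `B = [0; I]`. -/
def quadB : Matrix (Fin 3 ⊕ Fin 3) (Fin 3) ℝ :=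
  Matrix.of (Sum.elim (fun _ _ => (0 : ℝ)) (fun i j => if i = j then 1 else 0))

/-! With `y = P_w ξ` and `V = ξᵀ P_w ξ = yᵀ Q_w y`, the block conditions are Schur complements
giving `(Bᵀ y)ᵢ² ≤ v̄ᵢ² V`. Hence, when `V ≥ 1`, the input `-γ Bᵀ y` scaled by `(γ V)⁻¹` lies in the
box `B̄ ⊆ V_c`, so the saturation factor satisfies `γ λ* ≥ V⁻¹`. Testing the LMI against `y` and
using `2 eᵀ w ≤ β⁻¹ |e|² + β |w|²` then gives `dV/dt ≤ 2 (∑ v̄ᵢ²) (V - 1)` whenever `V ≥ 1`, and a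
barrier argument shows that a function with this property that starts below `1` stays below `1`. -/

section

variable {n m ι : Type*} [Fintype n] [Fintype m] [Fintype ι]

theorem le_of_hasDerivAt_le_mul_sub {V D : ℝ → ℝ} {a L : ℝ}
    (hV : ∀ t ≥ (0 : ℝ), HasDerivAt V (D t) t)
    (hD : ∀ t ≥ (0 : ℝ), a ≤ V t → D t ≤ L * (V t - a)) (h0 : V 0 ≤ a) :
    ∀ t ≥ (0 : ℝ), V t ≤ a := by
  intro T hT
  set M := |L| + 1
  -- barrier `a + ε exp (M t)`, which `V` can never touch from below
  have barrier : ∀ ε > (0 : ℝ), V T ≤ a + ε * Real.exp (M * T) := by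
    intro ε hε
    have hB : ∀ s, HasDerivAt (fun r => a + ε * Real.exp (M * r))
        (ε * (Real.exp (M * s) * M)) s := fun s => by
      simpa using (((hasDerivAt_id s).const_mul M).exp.const_mul ε).const_add a
    refine image_le_of_deriv_right_lt_deriv_boundary
      (fun s hs => (hV s hs.1).continuousAt.continuousWithinAt)
      (fun s hs => (hV s hs.1).hasDerivWithinAt) (by simp; linarith) hB
      (fun s hs hVs => ?_) (right_mem_Icc.mpr hT)
    have hpos : 0 < ε * Real.exp (M * s) := by positivity
    calc D s ≤ L * (ε * Real.exp (M * s)) := by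
          simpa [hVs] using hD s hs.1 (by rw [hVs]; linarith)
      _ ≤ |L| * (ε * Real.exp (M * s)) := by gcongr; exact le_abs_self L
      _ < ε * (Real.exp (M * s) * M) := by nlinarith
  refine le_of_forall_pos_le_add fun δ hδ => ?_
  simpa [mul_assoc, ← Real.exp_add] using barrier (δ * Real.exp (-(M * T))) (by positivity)

theorem HasDerivAt.dotProduct {f g : ℝ → n → ℝ} {f' g' : n → ℝ} {t : ℝ}
    (hf : HasDerivAt f f' t) (hg : HasDerivAt g g' t) :
    HasDerivAt (fun s => f s ⬝ᵥ g s) (f' ⬝ᵥ g t + f t ⬝ᵥ g') t := by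
  simp only [_root_.dotProduct, ← Finset.sum_add_distrib]
  exact HasDerivAt.fun_sum fun i _ =>
    (hasDerivAt_pi.mp hf i).mul (hasDerivAt_pi.mp hg i)

theorem HasDerivAt.mulVec {k : Type*} (M : Matrix k n ℝ) {f : ℝ → n → ℝ}
    {f' : n → ℝ} {t : ℝ} (hf : HasDerivAt f f' t) :
    HasDerivAt (fun s => M *ᵥ f s) (M *ᵥ f') t :=
  hasDerivAt_pi.mpr fun i => by
    simpa [Matrix.mulVec] using (hasDerivAt_const t (fun j => M i j)).dotProduct hf

theorem HasDerivAt.dotProduct_mulVec_self {P : Matrix n n ℝ}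
    (hP : Pᵀ = P) {f : ℝ → n → ℝ} {f' : n → ℝ} {t : ℝ} (hf : HasDerivAt f f' t) :
    HasDerivAt (fun s => f s ⬝ᵥ (P *ᵥ f s)) (2 * (P *ᵥ f t ⬝ᵥ f')) t := by
  convert hf.dotProduct (hf.mulVec P) using 1
  rw [dotProduct_comm f', dotProduct_mulVec, ← mulVec_transpose, hP]
  ring

theorem two_mul_dotProduct_le {β : ℝ} (hβ : 0 < β) (e w : ι → ℝ) :
    2 * (e ⬝ᵥ w) ≤ β⁻¹ * (e ⬝ᵥ e) + β * (w ⬝ᵥ w) := by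
  simp only [dotProduct, Finset.mul_sum, ← Finset.sum_add_distrib]
  refine Finset.sum_le_sum fun i _ => ?_
  have : 0 ≤ β⁻¹ * (e i - β * w i) ^ 2 := by positivity
  have hβ' : β⁻¹ * β = 1 := inv_mul_cancel₀ hβ.ne'
  nlinarith

theorem sq_dotProduct_le_of_fromBlocks_posSemidef {a : ℝ} {b : n → ℝ} {Q : Matrix n n ℝ}
    (h : (fromBlocks (of fun (_ _ : Fin 1) => a) (of fun (_ : Fin 1) r => b r)
      (of fun r (_ : Fin 1) => b r) Q).PosSemidef) (y : n → ℝ) :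
    (b ⬝ᵥ y) ^ 2 ≤ a * (y ⬝ᵥ (Q *ᵥ y)) := by
  -- test the block matrix against `(c, y)`; nonnegativity in `c` forces the discriminant `≤ 0`
  have hquad : ∀ c : ℝ, 0 ≤ a * (c * c) + 2 * (b ⬝ᵥ y) * c + y ⬝ᵥ (Q *ᵥ y) := fun c => by
    have := h.dotProduct_mulVec_nonneg (Sum.elim (fun _ => c) y)
    have e₁ : (of fun (_ _ : Fin 1) => a) *ᵥ (fun _ => c) = fun _ => a * c := by
      ext; simp [mulVec, dotProduct]
    have e₂ : (of fun (_ : Fin 1) r => b r) *ᵥ y = fun _ => b ⬝ᵥ y := rfl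
    have e₃ : (of fun r (_ : Fin 1) => b r) *ᵥ (fun _ => c) = c • b := by
      ext; simp [mulVec, dotProduct, mul_comm]
    simp only [star_trivial, fromBlocks_mulVec, sumElim_dotProduct_sumElim, Sum.elim_comp_inl,
      Sum.elim_comp_inr, dotProduct_add, e₁, e₂, e₃, dotProduct_smul, smul_eq_mul,
      dotProduct_comm y b] at this
    simp only [dotProduct, Finset.univ_unique, Finset.sum_singleton] at this ⊢
    linarith
  have := discrim_le_zero hquad
  rw [discrim] at this
  nlinarith

theorem dotProduct_mulVec_lmi_nonpos {Q A : Matrix n n ℝ} {B : Matrix n m ℝ} {E : Matrix n ι ℝ}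
    {β : ℝ} (hQ : Qᵀ = Q)
    (h : (-(Q * Aᵀ + A * Q - (2 : ℝ) • (B * Bᵀ) + β • Q + β⁻¹ • (E * Eᵀ))).PosSemidef)
    (y : n → ℝ) :
    2 * (y ⬝ᵥ (A *ᵥ (Q *ᵥ y))) - 2 * (Bᵀ *ᵥ y ⬝ᵥ Bᵀ *ᵥ y) + β * (y ⬝ᵥ (Q *ᵥ y))
      + β⁻¹ * (Eᵀ *ᵥ y ⬝ᵥ Eᵀ *ᵥ y) ≤ 0 := by
  have := h.dotProduct_mulVec_nonneg y
  simp only [star_trivial, neg_mulVec, dotProduct_neg, neg_nonneg, add_mulVec, sub_mulVec,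
    smul_mulVec, ← mulVec_mulVec, dotProduct_add, dotProduct_sub, dotProduct_smul,
    smul_eq_mul] at this
  have hQA : y ⬝ᵥ (Q *ᵥ (Aᵀ *ᵥ y)) = y ⬝ᵥ (A *ᵥ (Q *ᵥ y)) := by
    conv_lhs => rw [← hQ]
    rw [dotProduct_mulVec, vecMul_transpose, dotProduct_mulVec, vecMul_transpose,
      dotProduct_comm]
  rw [hQA, dotProduct_mulVec y B, dotProduct_mulVec y E, ← mulVec_transpose,
    ← mulVec_transpose] at this
  linarith

theorem le_lamStar {K : Set (Fin 3 → ℝ)} {u : Fin 3 → ℝ} {l : ℝ} (hl : l ∈ Ioc (0 : ℝ) 1)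
    (hK : l • u ∈ K) : l ≤ lamStar K u :=
  le_csSup ⟨1, fun _ hz => hz.1.2⟩ ⟨hl, hK⟩

theorem inv_le_mul_lamStar {K : Set (Fin 3 → ℝ)} {vbar : Fin 3 → ℝ}
    (hbox : {v : Fin 3 → ℝ | ∀ i, |v i| ≤ vbar i} ⊆ K) {γ V : ℝ} (hγ : 1 ≤ γ) (hV : 1 ≤ V)
    {u : Fin 3 → ℝ} (hu : ∀ i, u i ^ 2 ≤ vbar i ^ 2 * V) (hvbar : ∀ i, 0 ≤ vbar i) :
    V⁻¹ ≤ γ * lamStar K (-(γ • u)) := by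
  have hV0 : 0 < V := by linarith
  have hγ0 : 0 < γ := by linarith
  -- `(γ V)⁻¹ • (-(γ • u)) = -(V⁻¹ • u)` lies in the box because `|u i| ≤ vbar i √V ≤ vbar i V`
  have hmem : (γ * V)⁻¹ • (-(γ • u)) ∈ K := by
    refine hbox fun i => ?_
    have hVV : vbar i ^ 2 * V ≤ (vbar i * V) ^ 2 := by
      rw [mul_pow]; gcongr; nlinarith
    have hui : |u i| ≤ vbar i * V :=
      abs_le_of_sq_le_sq ((hu i).trans hVV) (mul_nonneg (hvbar i) hV0.le)
    simp only [Pi.smul_apply, Pi.neg_apply, smul_eq_mul, abs_mul, abs_neg, abs_of_pos hγ0,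
      abs_inv, abs_of_pos (mul_pos hγ0 hV0)]
    rw [mul_inv, show γ⁻¹ * V⁻¹ * (γ * |u i|) = V⁻¹ * |u i| by field_simp, inv_mul_le_iff₀ hV0]
    linarith
  have hl : (γ * V)⁻¹ ∈ Ioc (0 : ℝ) 1 :=
    ⟨by positivity, inv_le_one_of_one_le₀ (by nlinarith)⟩
  calc V⁻¹ = γ * (γ * V)⁻¹ := by field_simp
    _ ≤ γ * lamStar K (-(γ • u)) := by gcongr; exact le_lamStar hl hmem

theorem dotProduct_mulVec_sat (K : Set (Fin 3 → ℝ))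
    (B : Matrix n (Fin 3) ℝ) (γ : ℝ) (y : n → ℝ) :
    y ⬝ᵥ (B *ᵥ sat K (-(γ • (Bᵀ *ᵥ y)))) =
      -(γ * lamStar K (-(γ • (Bᵀ *ᵥ y)))) * (Bᵀ *ᵥ y ⬝ᵥ Bᵀ *ᵥ y) := by
  rw [sat, mulVec_smul, mulVec_neg, mulVec_smul, dotProduct_smul, dotProduct_neg,
    dotProduct_smul, dotProduct_mulVec, ← mulVec_transpose]
  simp only [smul_eq_mul]
  ring

theorem two_mul_dotProduct_closedLoop_le {K : Set (Fin 3 → ℝ)} {vbar : Fin 3 → ℝ}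
    (hvbar : ∀ i, 0 ≤ vbar i)
    (hbox : {v : Fin 3 → ℝ | ∀ i, |v i| ≤ vbar i} ⊆ K)
    {Q A : Matrix n n ℝ} {B : Matrix n (Fin 3) ℝ} {E : Matrix n ι ℝ} {β γ : ℝ} (hQ : Qᵀ = Q)
    (hblock : ∀ i : Fin 3,
      (fromBlocks (of fun (_ _ : Fin 1) => vbar i ^ 2) (of fun (_ : Fin 1) r => B r i)
        (of fun r (_ : Fin 1) => B r i) Q).PosSemidef)
    (hLMI : (-(Q * Aᵀ + A * Q - (2 : ℝ) • (B * Bᵀ) + β • Q + β⁻¹ • (E * Eᵀ))).PosSemidef)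
    (hβ : 0 < β) (hγ : 1 ≤ γ) {w : ι → ℝ} (hw : w ⬝ᵥ w ≤ 1) {y : n → ℝ}
    (hV : 1 ≤ y ⬝ᵥ (Q *ᵥ y)) :
    2 * (y ⬝ᵥ (A *ᵥ (Q *ᵥ y) + B *ᵥ sat K (-(γ • (Bᵀ *ᵥ y))) + E *ᵥ w)) ≤
      2 * (∑ i, vbar i ^ 2) * (y ⬝ᵥ (Q *ᵥ y) - 1) := by
  set V := y ⬝ᵥ (Q *ᵥ y)
  set v := Bᵀ *ᵥ y
  set c := ∑ i, vbar i ^ 2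
  set κ := γ * lamStar K (-(γ • v))
  have hcoord : ∀ i, v i ^ 2 ≤ vbar i ^ 2 * V := fun i =>
    sq_dotProduct_le_of_fromBlocks_posSemidef (hblock i) y
  have hvv : v ⬝ᵥ v ≤ c * V := by
    simp only [dotProduct, c, Finset.sum_mul, ← sq]
    exact Finset.sum_le_sum fun i _ => hcoord i
  have hκ : V⁻¹ ≤ κ := inv_le_mul_lamStar hbox hγ hV hcoord hvbar
  have hEw : y ⬝ᵥ (E *ᵥ w) = Eᵀ *ᵥ y ⬝ᵥ w := by rw [dotProduct_mulVec, ← mulVec_transpose]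
  have hlmi := dotProduct_mulVec_lmi_nonpos hQ hLMI y
  have hamgm := two_mul_dotProduct_le hβ (Eᵀ *ᵥ y) w
  have hβw : β * (w ⬝ᵥ w) ≤ β * V := by gcongr; linarith
  -- the saturated input still dissipates at rate `κ ≥ V⁻¹`
  have hsat : (1 - κ) * (v ⬝ᵥ v) ≤ c * (V - 1) := calc
    (1 - κ) * (v ⬝ᵥ v) ≤ (1 - V⁻¹) * (v ⬝ᵥ v) := by
      gcongr
      exact dotProduct_star_self_nonneg v
    _ ≤ (1 - V⁻¹) * (c * V) := by
      gcongr
      exact sub_nonneg.mpr (inv_le_one_of_one_le₀ hV)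
    _ = c * (V - 1) := by field_simp
  rw [dotProduct_add, dotProduct_add, dotProduct_mulVec_sat, hEw]
  linarith

end

theorem stmt11_general (p : ℕ)
    (g Tmax εmax : ℝ)
    (vbar : Fin 3 → ℝ) (hvbar : ∀ i, 0 < vbar i)
    (hbox : {v : Fin 3 → ℝ | ∀ i, |v i| ≤ vbar i} ⊆ Vc g Tmax εmax)
    (Qw : Matrix (Fin 3 ⊕ Fin 3) (Fin 3 ⊕ Fin 3) ℝ) (hQsym : Qw.IsSymm) (hQ : Qw.PosDef)
    (Pw : Matrix (Fin 3 ⊕ Fin 3) (Fin 3 ⊕ Fin 3) ℝ) (hPw : Pw = Qw⁻¹)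
    (β : ℝ) (hβ : 0 < β)
    (E : Matrix (Fin 3 ⊕ Fin 3) (Fin p) ℝ)
    (hblock : ∀ i : Fin 3,
      (Matrix.fromBlocks (Matrix.of fun (_ _ : Fin 1) => (vbar i) ^ 2)
        (Matrix.of fun (_ : Fin 1) r => quadB r i)
        (Matrix.of fun r (_ : Fin 1) => quadB r i) Qw).PosSemidef)
    (hLMI : (-(Qw * quadAᵀ + quadA * Qw - (2 : ℝ) • (quadB * quadBᵀ) + β • Qw +
        β⁻¹ • (E * Eᵀ))).PosSemidef)
    (γ : ℝ) (hγ : 1 ≤ γ)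
    (w : ℝ → (Fin p → ℝ)) (hw : ∀ t ≥ (0 : ℝ), w t ⬝ᵥ w t ≤ 1)
    (ξ : ℝ → (Fin 3 ⊕ Fin 3 → ℝ))
    (hdyn : ∀ t ≥ (0 : ℝ), HasDerivAt ξ
      (quadA *ᵥ ξ t + quadB *ᵥ sat (Vc g Tmax εmax) (-(γ • (quadBᵀ *ᵥ (Pw *ᵥ ξ t)))) +
        E *ᵥ w t) t)
    (h0 : ξ 0 ⬝ᵥ (Pw *ᵥ ξ 0) ≤ 1) :
    ∀ t ≥ (0 : ℝ), ξ t ⬝ᵥ (Pw *ᵥ ξ t) ≤ 1 := by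
  have hQP : ∀ x, Qw *ᵥ (Pw *ᵥ x) = x := fun x => by
    rw [mulVec_mulVec, hPw, mul_nonsing_inv _ ((isUnit_iff_isUnit_det Qw).mp hQ.isUnit),
      one_mulVec]
  have hPsym : Pwᵀ = Pw := by rw [hPw, transpose_nonsing_inv, hQsym]
  refine le_of_hasDerivAt_le_mul_sub (L := 2 * ∑ i, vbar i ^ 2)
    (fun t ht => (hdyn t ht).dotProduct_mulVec_self hPsym) (fun t ht hV => ?_) h0
  -- in the coordinates `y = Pw ξ` the Lyapunov function is `yᵀ Qw y`
  have hx : Qw *ᵥ (Pw *ᵥ ξ t) = ξ t := hQP (ξ t)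
  have hV' : Pw *ᵥ ξ t ⬝ᵥ (Qw *ᵥ (Pw *ᵥ ξ t)) = ξ t ⬝ᵥ (Pw *ᵥ ξ t) := by
    rw [hx, dotProduct_comm]
  have := two_mul_dotProduct_closedLoop_le (fun i => (hvbar i).le) hbox hQsym hblock hLMI hβ
    hγ (hw t ht) (by rwa [hV'])
  rwa [hV', hx] at this

theorem stmt11 (p : ℕ)
    (g Tmax εmax : ℝ) (hg : 0 < g) (hT : 0 < Tmax) (hεmax : εmax ∈ Set.Ioo 0 (Real.pi / 2))
    (vbar : Fin 3 → ℝ) (hvbar : ∀ i, 0 < vbar i)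
    (hbox : {v : Fin 3 → ℝ | ∀ i, |v i| ≤ vbar i} ⊆ Vc g Tmax εmax)
    (Qw : Matrix (Fin 3 ⊕ Fin 3) (Fin 3 ⊕ Fin 3) ℝ) (hQsym : Qw.IsSymm) (hQ : Qw.PosDef)
    (Pw : Matrix (Fin 3 ⊕ Fin 3) (Fin 3 ⊕ Fin 3) ℝ) (hPw : Pw = Qw⁻¹)
    (β : ℝ) (hβ : 0 < β)
    (E : Matrix (Fin 3 ⊕ Fin 3) (Fin p) ℝ)
    (hblock : ∀ i : Fin 3,
      (Matrix.fromBlocks (Matrix.of fun (_ _ : Fin 1) => (vbar i) ^ 2)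
        (Matrix.of fun (_ : Fin 1) r => quadB r i)
        (Matrix.of fun r (_ : Fin 1) => quadB r i) Qw).PosSemidef)
    (hLMI : (-(Qw * quadAᵀ + quadA * Qw - (2 : ℝ) • (quadB * quadBᵀ) + β • Qw +
        β⁻¹ • (E * Eᵀ))).PosSemidef)
    (γ : ℝ) (hγ : 1 ≤ γ)
    (w : ℝ → (Fin p → ℝ)) (hw : ∀ t ≥ (0 : ℝ), w t ⬝ᵥ w t ≤ 1)
    (ξ : ℝ → (Fin 3 ⊕ Fin 3 → ℝ))
    (hdyn : ∀ t ≥ (0 : ℝ), HasDerivAt ξ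
      (quadA *ᵥ ξ t + quadB *ᵥ sat (Vc g Tmax εmax) (-(γ • (quadBᵀ *ᵥ (Pw *ᵥ ξ t)))) +
        E *ᵥ w t) t)
    (h0 : ξ 0 ⬝ᵥ (Pw *ᵥ ξ 0) ≤ 1) :
    ∀ t ≥ (0 : ℝ), ξ t ⬝ᵥ (Pw *ᵥ ξ t) ≤ 1 :=
  stmt11_general p g Tmax εmax vbar hvbar hbox Qw hQsym hQ Pw hPw β hβ E hblock hLMI γ hγ w hw ξ
    hdyn h0
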